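/- Define an accessible GPT fragment over a finite-dimensional real vector space V as a tuple (Ω ⊆ V, E ⊆ V*, u ∈ V*) with u(s) ≤ 1 and 0 ≤ e(s) ≤ 1 for all s ∈ Ω, e ∈ E, and such that for every e ∈ E there exists e⊥ ∈ E with e + e⊥ = u. Say it is simplex-embeddable if there exist n and linear maps ι : V → ℝ^n, κ : V* → (ℝ^n)* with ι(Ω) ⊆ Δ_sub^n, κ(E) ⊆ (Δ_sub^n)*, κ(e)(ι(s)) = e(s) for all s ∈ Ω, e ∈ E, and κ(u) = 𝟏_n. Theorem: if two such fragments (Ω, E, u) and (Ω', E', u) over the same V satisfy Cone[Ω] = Cone[Ω'] and Cone[E] = Cone[E'], then (Ω, E, u) is simplex-embeddable if and only if (Ω', E', u) is. -/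
import Mathlib


/-- `coneOf X = {λ • x | x ∈ X, 0 ≤ λ}`. -/
def coneOf {V : Type*} [AddCommGroup V] [Module ℝ V] (X : Set V) : Set V :=
  {y | ∃ x ∈ X, ∃ l : ℝ, 0 ≤ l ∧ y = l • x}

/-- The subnormalized simplex: convex hull of `0` and the standard basis vectors. -/
def stdSimplexSub (n : ℕ) : Set (Fin n → ℝ) :=
  convexHull ℝ (insert (0 : Fin n → ℝ) (Set.range fun i : Fin n => Pi.single i 1))

/-- The dual set of a set of vectors: functionals valued in `[0,1]` on it. -/
def dualSet {n : ℕ} (Ω : Set (Fin n → ℝ)) : Set (Module.Dual ℝ (Fin n → ℝ)) :=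
  {f | ∀ v ∈ Ω, 0 ≤ f v ∧ f v ≤ 1}

/-- The coordinate-sum functional `𝟏_n`. -/
noncomputable def oneFun (n : ℕ) : Module.Dual ℝ (Fin n → ℝ) :=
  ∑ i : Fin n, LinearMap.proj i

/-- Simplex embeddability of an accessible GPT fragment `(Ω, E, u)`. -/
def SimplexEmbeddable {V : Type*} [AddCommGroup V] [Module ℝ V]
    (Ω : Set V) (E : Set (Module.Dual ℝ V)) (u : Module.Dual ℝ V) : Prop :=
  ∃ (n : ℕ) (ι : V →ₗ[ℝ] (Fin n → ℝ))
    (κ : Module.Dual ℝ V →ₗ[ℝ] Module.Dual ℝ (Fin n → ℝ)),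
    (∀ s ∈ Ω, ι s ∈ stdSimplexSub n) ∧
    (∀ e ∈ E, κ e ∈ dualSet (stdSimplexSub n)) ∧
    (∀ s ∈ Ω, ∀ e ∈ E, κ e (ι s) = e s) ∧
    κ u = oneFun n

lemma oneFun_apply (n : ℕ) (v : Fin n → ℝ) : oneFun n v = ∑ i, v i := by
  simp [oneFun]

lemma mem_stdSimplexSub {n : ℕ} {x : Fin n → ℝ} :
    x ∈ stdSimplexSub n ↔ (∀ i, 0 ≤ x i) ∧ ∑ i, x i ≤ 1 := by
  constructor
  · intro hx
    have hconv : Convex ℝ {y : Fin n → ℝ | (∀ i, 0 ≤ y i) ∧ ∑ i, y i ≤ 1} := by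
      intro a ha b hb p q hp hq hpq
      refine ⟨fun i => add_nonneg (mul_nonneg hp (ha.1 i)) (mul_nonneg hq (hb.1 i)), ?_⟩
      simp only [Pi.add_apply, Pi.smul_apply, smul_eq_mul]
      rw [Finset.sum_add_distrib, ← Finset.mul_sum, ← Finset.mul_sum]
      nlinarith [ha.2, hb.2]
    refine convexHull_min ?_ hconv hx
    rintro y (rfl | ⟨i, rfl⟩)
    · simp
    · constructor
      · intro j
        rcases eq_or_ne i j with rfl | h
        · simp
        · simp [Pi.single_apply, h.symm]
      · simp [Pi.single_apply]
  · rintro ⟨h0, h1⟩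
    classical
    have key : x = (Finset.univ : Finset (Option (Fin n))).centerMass
        (fun o => Option.elim o (1 - ∑ i, x i) x)
        (fun o => Option.elim o 0 (fun i => Pi.single i 1)) := by
      rw [Finset.centerMass_eq_of_sum_1]
      · rw [Fintype.sum_option]
        simp only [Option.elim]
        rw [smul_zero, zero_add]
        have := pi_eq_sum_univ x
        convert this using 2 with i
        ext j
        simp [Pi.single_apply, eq_comm]
      · rw [Fintype.sum_option]
        simp [Option.elim]
    rw [key]
    apply Finset.centerMass_mem_convexHull
    · rintro (_ | i) _
      · simpa using h1
      · exact h0 i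
    · rw [Fintype.sum_option]; simp [Option.elim]
    · rintro (_ | i) _
      · exact Set.mem_insert _ _
      · exact Set.mem_insert_iff.2 (Or.inr ⟨i, rfl⟩)

lemma self_subset_coneOf {V : Type*} [AddCommGroup V] [Module ℝ V] (X : Set V) :
    X ⊆ coneOf X := fun x hx => ⟨x, hx, 1, zero_le_one, (one_smul ℝ x).symm⟩

lemma simplexEmbeddable_mono {V : Type*} [AddCommGroup V] [Module ℝ V]
    (Ω Ω' : Set V) (E E' : Set (Module.Dual ℝ V)) (u : Module.Dual ℝ V)
    (hu' : ∀ s ∈ Ω', u s ≤ 1)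
    (hcomp' : ∀ e ∈ E', ∃ f ∈ E', e + f = u)
    (hΩ : Ω' ⊆ coneOf Ω) (hE : E' ⊆ coneOf E) :
    SimplexEmbeddable Ω E u → SimplexEmbeddable Ω' E' u := by
  rintro ⟨n, ι, κ, h1, h2, h3, h4⟩
  rcases Set.eq_empty_or_nonempty E' with rfl | ⟨e₁, he₁⟩
  · -- trivial embedding into ℝ⁰
    refine ⟨0, (0 : _ →ₗ[ℝ] (Fin 0 → ℝ)), (0 : Module.Dual ℝ _ →ₗ[ℝ] Module.Dual ℝ (Fin 0 → ℝ)), fun s _ => ?_, by simp [dualSet], by simp, ?_⟩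
    · exact subset_convexHull ℝ _ (Set.mem_insert _ _)
    · apply LinearMap.ext
      intro v
      have hv : v = 0 := Subsingleton.elim v 0
      simp [hv, oneFun]
  · -- κ u evaluates like u on images of Ω
    have hκu : ∀ s ∈ Ω, oneFun n (ι s) = u s := by
      intro s hs
      obtain ⟨f₁, hf₁, hef⟩ := hcomp' e₁ he₁
      obtain ⟨e₀, he₀, m₁, hm₁, rfl⟩ := hE he₁
      obtain ⟨f₀, hf₀, m₂, hm₂, rfl⟩ := hE hf₁
      have : κ u (ι s) = u s := by
        rw [← hef]
        simp only [map_add, map_smul, LinearMap.add_apply, LinearMap.smul_apply,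
          smul_eq_mul]
        rw [h3 s hs e₀ he₀, h3 s hs f₀ hf₀]
      rw [← h4]; exact this
    refine ⟨n, ι, κ, ?_, ?_, ?_, h4⟩
    · -- states
      rintro s' hs'
      obtain ⟨s, hs, l, hl, rfl⟩ := hΩ hs'
      have hms := mem_stdSimplexSub.mp (h1 s hs)
      rw [map_smul, mem_stdSimplexSub]
      constructor
      · intro i
        exact mul_nonneg hl (hms.1 i)
      · have : ∑ i, (l • ι s) i = l * u s := by
          simp only [Pi.smul_apply, smul_eq_mul, ← Finset.mul_sum]
          rw [← oneFun_apply, hκu s hs]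
        rw [this]
        have := hu' _ hs'
        simpa [mul_comm] using this
    · -- effects
      rintro e' he'
      obtain ⟨f', hf', hef⟩ := hcomp' e' he'
      obtain ⟨e, he, m, hm, rfl⟩ := hE he'
      obtain ⟨f, hf, m₂, hm₂, rfl⟩ := hE hf'
      intro v hv
      have hvs := mem_stdSimplexSub.mp hv
      have hev := h2 e he v hv
      have hfv := h2 f hf v hv
      constructor
      · simp only [map_smul, LinearMap.smul_apply, smul_eq_mul]
        exact mul_nonneg hm hev.1
      · have hsum : κ (m • e) v + κ (m₂ • f) v = oneFun n v := by
          rw [← LinearMap.add_apply, ← map_add, hef, h4]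
        have h1v : oneFun n v ≤ 1 := by rw [oneFun_apply]; exact hvs.2
        have hfv0 : 0 ≤ κ (m₂ • f) v := by
          simp only [map_smul, LinearMap.smul_apply, smul_eq_mul]
          exact mul_nonneg hm₂ hfv.1
        linarith
    · -- compatibility
      rintro s' hs' e' he'
      obtain ⟨s, hs, l, hl, rfl⟩ := hΩ hs'
      obtain ⟨e, he, m, hm, rfl⟩ := hE he'
      simp only [map_smul, LinearMap.smul_apply, smul_eq_mul]
      rw [h3 s hs e he]

theorem simplexEmbeddable_iff_of_coneOf_eq {V : Type*} [AddCommGroup V] [Module ℝ V]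
    [FiniteDimensional ℝ V]
    (Ω Ω' : Set V) (E E' : Set (Module.Dual ℝ V)) (u : Module.Dual ℝ V)
    -- fragment conditions for (Ω, E, u)
    (hu : ∀ s ∈ Ω, u s ≤ 1)
    (hEs : ∀ s ∈ Ω, ∀ e ∈ E, 0 ≤ e s ∧ e s ≤ 1)
    (hcomp : ∀ e ∈ E, ∃ f ∈ E, e + f = u)
    -- fragment conditions for (Ω', E', u)
    (hu' : ∀ s ∈ Ω', u s ≤ 1)
    (hEs' : ∀ s ∈ Ω', ∀ e ∈ E', 0 ≤ e s ∧ e s ≤ 1)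
    (hcomp' : ∀ e ∈ E', ∃ f ∈ E', e + f = u)
    -- cone equivalence
    (hΩ : coneOf Ω = coneOf Ω') (hE : coneOf E = coneOf E') :
    SimplexEmbeddable Ω E u ↔ SimplexEmbeddable Ω' E' u := by
  constructor
  · exact simplexEmbeddable_mono Ω Ω' E E' u hu' hcomp'
      (fun x hx => hΩ ▸ self_subset_coneOf Ω' hx)
      (fun x hx => hE ▸ self_subset_coneOf E' hx)
  · exact simplexEmbeddable_mono Ω' Ω E' E u hu hcomp
      (fun x hx => hΩ.symm ▸ self_subset_coneOf Ω hx)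
      (fun x hx => hE.symm ▸ self_subset_coneOf E hx)
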